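/- arXiv:1604.00202 — 5 statements merged into one kernel-verified Lean document; each statement's English description precedes it below -/
import Mathlib

section
/- If visit subgraphs H1 and H2 are both compatible with a graph G, then their union H1 ∪ H2 is also compatible with G. -/
open scoped Classical

structure VisitSub (V : Type*) where
  verts : Set V
  arcs : V → V → Prop
  kernel : Set V

def VisitSub.IsVisit {V : Type*} (H : VisitSub V) : Prop :=
  H.kernel ⊆ H.verts ∧
  (∀ x y, H.arcs x y → x ∈ H.verts ∧ y ∈ H.verts) ∧
  (∀ x ∈ H.verts \ H.kernel, ∃ y ∈ H.kernel, H.arcs x y ∨ H.arcs y x) ∧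
  (∀ x y, H.arcs x y → x ∈ H.kernel ∨ y ∈ H.kernel)

def VisitSub.union {V : Type*} (H1 H2 : VisitSub V) : VisitSub V :=
  ⟨H1.verts ∪ H2.verts, fun x y => H1.arcs x y ∨ H2.arcs x y, H1.kernel ∪ H2.kernel⟩

/-- `H` is compatible with a directed graph `G` (on the same vertex universe):
(1) `H` is a subgraph of `G`, (2)-(3) the arcs of `G` with an endpoint in the kernel of `H`,
together with their endpoints, are exactly those of `H`. -/
def VisitSub.Compatible {V : Type*} (H : VisitSub V) (G : V → V → Prop) : Prop :=
  (∀ x y, H.arcs x y → G x y) ∧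
  (∀ x y, x ∈ H.kernel ∨ y ∈ H.kernel → (G x y ↔ H.arcs x y))

/-- If visit subgraphs `H1` and `H2` are both compatible with a graph `G`, then their
union is also compatible with `G`. -/
theorem stmt_1 {V : Type*} (H1 H2 : VisitSub V) (G : V → V → Prop)
    (h1 : H1.IsVisit) (h2 : H2.IsVisit)
    (hc1 : H1.Compatible G) (hc2 : H2.Compatible G) :
    (H1.union H2).Compatible G := by
  constructor
  · rintro x y (h | h)
    · exact hc1.1 x y h
    · exact hc2.1 x y h
  · rintro x y (hx | hy)
    · rcases hx with h | h
      · constructor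
        · intro hg; exact Or.inl ((hc1.2 x y (Or.inl h)).mp hg)
        · rintro (ha | ha); exacts [hc1.1 x y ha, hc2.1 x y ha]
      · constructor
        · intro hg; exact Or.inr ((hc2.2 x y (Or.inl h)).mp hg)
        · rintro (ha | ha); exacts [hc1.1 x y ha, hc2.1 x y ha]
    · rcases hy with h | h
      · constructor
        · intro hg; exact Or.inl ((hc1.2 x y (Or.inr h)).mp hg)
        · rintro (ha | ha); exacts [hc1.1 x y ha, hc2.1 x y ha]
      · constructor
        · intro hg; exact Or.inr ((hc2.2 x y (Or.inr h)).mp hg)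
        · rintro (ha | ha); exacts [hc1.1 x y ha, hc2.1 x y ha]
end

section
/- For a node v that is a dangling node (no outgoing arcs) in a graph G, adding a self-loop to v multiplies its PageRank score (as defined by the influence series without dangling-node preprocessing) by exactly 1/(1-α). -/
open scoped Classical BigOperators

/-- Out-degree of `z` in the directed graph with arc relation `A`. -/
noncomputable def outDeg {V : Type*} [Fintype V] (A : V → V → Prop) (z : V) : ℕ :=
  (Finset.univ.filter fun w => A z w).card

/-- Random-surfer one-step transition matrix (rows of dangling nodes are zero). -/
noncomputable def stepM {V : Type*} [Fintype V] (A : V → V → Prop) : Matrix V V ℝ :=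
  fun z w => if A z w then 1 / (outDeg A z : ℝ) else 0

/-- PageRank contribution of `z` to `v`:
`P(z,v) = (1-α)/n · Σ_τ α^τ · inf_τ(z,v)` where `inf_τ(z,v) = (M^τ) z v`. -/
noncomputable def contrib {V : Type*} [Fintype V] (α : ℝ) (A : V → V → Prop) (z v : V) : ℝ :=
  (1 - α) / (Fintype.card V : ℝ) * ∑' τ : ℕ, α ^ τ * (stepM A ^ τ) z v

/-- PageRank score of `v` with damping factor `α`. -/
noncomputable def pagerank {V : Type*} [Fintype V] (α : ℝ) (A : V → V → Prop) (v : V) : ℝ :=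
  (1 - α) / (Fintype.card V : ℝ) * ∑' τ : ℕ, α ^ τ * ∑ z, (stepM A ^ τ) z v

/-!
Write `M` for the transition matrix of `A` and `E` for the matrix unit at `(v, v)`, so that adding
the loop turns `M` into `M + E`. Since the row of the dangling node `v` in `M` vanishes, `E * M = 0`
and `E * E = E`, whence `(M + E) ^ τ = M ^ τ + (∑ s < τ, M ^ s) * E`: column `v` of `(M + E) ^ τ` is
the sum of columns `v` of `M ^ s` for `s ≤ τ`, the walk idling at `v` for the remaining steps.
Weighting by `α ^ τ` and summing turns this into a Cauchy product with `∑ α ^ t = 1 / (1 - α)`.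
-/

open Finset

theorem add_pow_of_mul_eq_zero_of_isIdempotentElem {R : Type*} [Semiring R] {M E : R}
    (hEM : E * M = 0) (hE : IsIdempotentElem E) (n : ℕ) :
    (M + E) ^ n = M ^ n + (∑ s ∈ range n, M ^ s) * E := by
  induction n with
  | zero => simp
  | succ n ih =>
    rw [pow_succ, ih, add_mul, mul_add, mul_add, mul_assoc _ E M, hEM, mul_zero, mul_assoc _ E E,
      hE.eq, ← pow_succ, sum_range_succ, add_mul]
    abel

theorem Matrix.add_single_self_pow_apply_of_row_eq_zero {n R : Type*} [Fintype n] [DecidableEq n]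
    [Semiring R] {M : Matrix n n R} {v : n} (hM : ∀ w, M v w = 0) (τ : ℕ) (z : n) :
    ((M + Matrix.single v v (1 : R)) ^ τ) z v = ∑ s ∈ range (τ + 1), (M ^ s) z v := by
  have hEM : Matrix.single v v (1 : R) * M = 0 := by
    ext i j
    by_cases hi : i = v
    · subst hi; simp [hM]
    · simp [Matrix.single_mul_apply_of_ne _ _ _ _ _ hi]
  have hE : IsIdempotentElem (Matrix.single v v (1 : R)) := by
    simp [IsIdempotentElem]
  rw [add_pow_of_mul_eq_zero_of_isIdempotentElem hEM hE, Matrix.add_apply,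
    Matrix.mul_single_apply_same, mul_one, Matrix.sum_apply, sum_range_succ, add_comm]

theorem Matrix.pow_apply_le_one {n R : Type*} [Fintype n] [DecidableEq n] [Semiring R]
    [PartialOrder R] [IsOrderedRing R] {M : Matrix n n R}
    (hM : ∀ i j, 0 ≤ M i j) (hrow : ∀ i, ∑ j, M i j ≤ 1) (k : ℕ) (i j : n) :
    (M ^ k) i j ≤ 1 := by
  induction k generalizing i with
  | zero => rw [pow_zero, Matrix.one_apply]; split <;> norm_num
  | succ k ih =>
    rw [pow_succ', Matrix.mul_apply]
    calc ∑ x, M i x * (M ^ k) x j ≤ ∑ x, M i x :=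
          sum_le_sum fun x _ => mul_le_of_le_one_right (hM i x) (ih x)
      _ ≤ 1 := hrow i

theorem tsum_pow_mul_sum_range_succ {𝕜 : Type*} [NormedField 𝕜] [CompleteSpace 𝕜] {α : 𝕜}
    (hα : ‖α‖ < 1) {b : ℕ → 𝕜} {C : ℝ} (hb : ∀ s, ‖b s‖ ≤ C) :
    ∑' τ, α ^ τ * ∑ s ∈ range (τ + 1), b s = (1 - α)⁻¹ * ∑' s, α ^ s * b s := by
  have hgeom : Summable fun t => ‖α ^ t‖ := by
    simpa [norm_pow] using summable_geometric_of_lt_one (norm_nonneg α) hα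
  have hf : Summable fun s => ‖α ^ s * b s‖ := by
    refine Summable.of_nonneg_of_le (fun _ => norm_nonneg _) (fun s => ?_) (hgeom.mul_right C)
    rw [norm_mul]
    exact mul_le_mul_of_nonneg_left (hb s) (norm_nonneg _)
  have hcauchy : ∀ τ, α ^ τ * ∑ s ∈ range (τ + 1), b s
      = ∑ s ∈ range (τ + 1), α ^ s * b s * α ^ (τ - s) := by
    intro τ
    rw [mul_sum]
    refine sum_congr rfl fun s hs => ?_
    rw [mul_right_comm, ← pow_add, Nat.add_sub_cancel' (Nat.lt_succ_iff.mp (mem_range.mp hs))]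
  rw [tsum_congr hcauchy, ← tsum_mul_tsum_eq_tsum_sum_range_of_summable_norm hf hgeom,
    tsum_geometric_of_norm_lt_one hα, mul_comm]

section stepM

variable {V : Type*} [Fintype V] {A : V → V → Prop}

theorem stepM_nonneg (z w : V) : 0 ≤ stepM A z w := by
  unfold stepM; split <;> positivity

theorem sum_stepM_le_one (z : V) : ∑ w, stepM A z w ≤ 1 := by
  have hsum : ∑ w, stepM A z w = (outDeg A z : ℝ) * (1 / (outDeg A z : ℝ)) := by
    simp [stepM, sum_ite, outDeg]
  rcases Nat.eq_zero_or_pos (outDeg A z) with h | h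
  · simp [hsum, h]
  · rw [hsum, mul_one_div, div_self (by positivity)]

theorem not_adj_of_outDeg_eq_zero {v : V} (hv : outDeg A v = 0) (w : V) : ¬ A v w := by
  simp only [outDeg, card_eq_zero, filter_eq_empty_iff, mem_univ, true_implies] at hv
  exact @hv w

theorem stepM_add_loop_of_outDeg_eq_zero {v : V} (hv : outDeg A v = 0) :
    stepM (fun x y => A x y ∨ (x = v ∧ y = v)) = stepM A + Matrix.single v v 1 := by
  ext z w
  by_cases hz : z = v
  · subst hz
    have hno := not_adj_of_outDeg_eq_zero hv
    have hdeg : outDeg (fun x y => A x y ∨ (x = z ∧ y = z)) z = 1 :=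
      card_eq_one.mpr ⟨z, by ext; simp [hno]⟩
    simp only [stepM, Matrix.add_apply, hdeg, hno, false_or, true_and, Nat.cast_one, div_one]
    by_cases hw : w = z
    · simp [hw]
    · simp [hw, Matrix.single_apply_of_col_ne _ _ (Ne.symm hw)]
  · have hdeg : outDeg (fun x y => A x y ∨ (x = v ∧ y = v)) z = outDeg A z := by
      simp [outDeg, hz]
    simp [stepM, hdeg, hz, Matrix.single_apply_of_row_ne (Ne.symm hz)]

end stepM

/-- Adding a self-loop to a dangling node `v` multiplies its PageRank score (as defined by
the influence series, without dangling-node preprocessing) by exactly `1/(1-α)`. -/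
theorem stmt_6 {V : Type*} [Fintype V] (α : ℝ) (hα : α ∈ Set.Ioo (0:ℝ) 1)
    (A : V → V → Prop) (v : V) (hdangling : outDeg A v = 0) :
    pagerank α (fun x y => A x y ∨ (x = v ∧ y = v)) v = (1 / (1 - α)) * pagerank α A v := by
  have hcol (τ : ℕ) (z : V) : (stepM (fun x y => A x y ∨ (x = v ∧ y = v)) ^ τ) z v
      = ∑ s ∈ range (τ + 1), (stepM A ^ s) z v := by
    rw [stepM_add_loop_of_outDeg_eq_zero hdangling]
    exact Matrix.add_single_self_pow_apply_of_row_eq_zero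
      (fun w => by simp [stepM, not_adj_of_outDeg_eq_zero hdangling w]) τ z
  have hbound (s : ℕ) : ‖∑ z, (stepM A ^ s) z v‖ ≤ Fintype.card V := by
    rw [Real.norm_of_nonneg (sum_nonneg fun z _ => Matrix.pow_apply_nonneg stepM_nonneg s z v)]
    simpa using sum_le_sum fun z (_ : z ∈ univ) =>
      Matrix.pow_apply_le_one stepM_nonneg sum_stepM_le_one s z v
  have hα' : ‖α‖ < 1 := by rw [Real.norm_of_nonneg hα.1.le]; exact hα.2
  unfold pagerank
  simp_rw [hcol, sum_comm (s := univ)]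
  rw [tsum_pow_mul_sum_range_succ hα' hbound]
  ring
end

section
/- The kernel score P_H(v) of a kernel node v in a visit subgraph H is a lower bound on the PageRank score of v in any graph G compatible with H, up to the normalization factor: precisely, if G is compatible with H and |G| = |H| (no nodes added), then P(v) ≥ P_H(v); more generally P(v) ≥ P_H(v)·|H|/|G| for any compatible G, since every kernel-only path in H exists in G and contributes identically up to the restart-probability rescaling. -/
open scoped Classical BigOperators

/-- Out-degree inside the visit subgraph `H`. -/
noncomputable def VisitSub.outDegH {V : Type*} [Fintype V] (H : VisitSub V) (z : V) : ℕ :=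
  (Finset.univ.filter fun w => H.arcs z w).card

/-- Transition matrix restricted to kernel-only steps of `H`. -/
noncomputable def VisitSub.kerM {V : Type*} [Fintype V] (H : VisitSub V) : Matrix V V ℝ :=
  fun z w => if z ∈ H.kernel ∧ w ∈ H.kernel ∧ H.arcs z w then 1 / (H.outDegH z : ℝ) else 0

/-- Kernel contribution `P_H(z,v)`: PageRank contribution of `z` to `v` through paths whose
nodes all lie in the kernel of `H`, with restart probability `1/|H|`. -/
noncomputable def VisitSub.kernelContrib {V : Type*} [Fintype V]
    (α : ℝ) (H : VisitSub V) (z v : V) : ℝ :=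
  (1 - α) / (H.verts.ncard : ℝ) * ∑' τ : ℕ, α ^ τ * (H.kerM ^ τ) z v

/-- Kernel score `P_H(v) = Σ_z P_H(z,v)`. -/
noncomputable def VisitSub.kernelScore {V : Type*} [Fintype V]
    (α : ℝ) (H : VisitSub V) (v : V) : ℝ :=
  ∑ z, H.kernelContrib α z v

/-- `u` ranks strictly above `v` (beyond the `ε`-tie-threshold) in the graph `G`. -/
def RankAbove {V : Type*} [Fintype V] (α ε : ℝ) (G : V → V → Prop) (u v : V) : Prop :=
  pagerank α G u > (1 + ε) * pagerank α G v

/-- `H` is a ranking subgraph for `u, v`: both are kernel nodes and no two graphs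
compatible with `H` rank them in opposite (strict) ways. -/
def VisitSub.IsRankingPair {V : Type*} [Fintype V]
    (α ε : ℝ) (H : VisitSub V) (u v : V) : Prop :=
  u ∈ H.kernel ∧ v ∈ H.kernel ∧
  ¬ ∃ G G' : V → V → Prop, H.Compatible G ∧ H.Compatible G' ∧
      RankAbove α ε G u v ∧ RankAbove α ε G' v u

section Aux

variable {V : Type*} [Fintype V]

lemma pow_entry_nonneg (M : Matrix V V ℝ) (h : ∀ i j, 0 ≤ M i j) :
    ∀ n i j, 0 ≤ (M ^ n) i j := by
  intro n
  induction n with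
  | zero =>
      intro i j
      simp only [pow_zero, Matrix.one_apply]
      split <;> norm_num
  | succ n ih =>
      intro i j
      rw [pow_succ, Matrix.mul_apply]
      exact Finset.sum_nonneg fun k _ => mul_nonneg (ih i k) (h k j)

lemma pow_rowsum_le_one (M : Matrix V V ℝ) (h0 : ∀ i j, 0 ≤ M i j)
    (h1 : ∀ i, ∑ j, M i j ≤ 1) : ∀ n i, ∑ j, (M ^ n) i j ≤ 1 := by
  intro n
  induction n with
  | zero =>
      intro i
      simp [Matrix.one_apply]
  | succ n ih =>
      intro i
      have : ∑ j, (M ^ (n+1)) i j = ∑ k, (M ^ n) i k * ∑ j, M k j := by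
        simp only [pow_succ, Matrix.mul_apply, Finset.mul_sum]
        rw [Finset.sum_comm]
      rw [this]
      calc ∑ k, (M ^ n) i k * ∑ j, M k j ≤ ∑ k, (M ^ n) i k * 1 := by
            refine Finset.sum_le_sum fun k _ => ?_
            exact mul_le_mul_of_nonneg_left (h1 k) (pow_entry_nonneg M h0 n i k)
        _ ≤ 1 := by simpa using ih i

lemma pow_entry_le_one (M : Matrix V V ℝ) (h0 : ∀ i j, 0 ≤ M i j)
    (h1 : ∀ i, ∑ j, M i j ≤ 1) (n : ℕ) (i j : V) : (M ^ n) i j ≤ 1 := by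
  calc (M ^ n) i j ≤ ∑ k, (M ^ n) i k :=
        Finset.single_le_sum (fun k _ => pow_entry_nonneg M h0 n i k) (Finset.mem_univ j)
    _ ≤ 1 := pow_rowsum_le_one M h0 h1 n i

lemma pow_entry_mono (M N : Matrix V V ℝ) (hM : ∀ i j, 0 ≤ M i j)
    (hle : ∀ i j, M i j ≤ N i j) : ∀ n i j, (M ^ n) i j ≤ (N ^ n) i j := by
  have hN : ∀ i j, 0 ≤ N i j := fun i j => le_trans (hM i j) (hle i j)
  intro n
  induction n with
  | zero => intro i j; simp
  | succ n ih =>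
      intro i j
      rw [pow_succ, pow_succ, Matrix.mul_apply, Matrix.mul_apply]
      refine Finset.sum_le_sum fun k _ => ?_
      exact mul_le_mul (ih i k) (hle k j) (hM k j) (pow_entry_nonneg N hN n i k)

lemma stepM_nonneg_s7 (A : V → V → Prop) (i j : V) : 0 ≤ stepM A i j := by
  unfold stepM
  split <;> positivity

lemma stepM_rowsum_le_one (A : V → V → Prop) (i : V) : ∑ j, stepM A i j ≤ 1 := by
  unfold stepM
  rw [Finset.sum_ite, Finset.sum_const_zero, add_zero, Finset.sum_const, nsmul_eq_mul]
  rcases Nat.eq_zero_or_pos (outDeg A i) with h | h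
  · rw [show (Finset.univ.filter fun w => A i w) = ∅ by
      simpa [outDeg, Finset.card_eq_zero] using h]
    simp
  · rw [show (Finset.univ.filter fun w => A i w).card = outDeg A i from rfl]
    rw [mul_one_div, div_self (by positivity)]

lemma kerM_nonneg (H : VisitSub V) (i j : V) : 0 ≤ H.kerM i j := by
  unfold VisitSub.kerM
  split <;> positivity

lemma kerM_le_stepM (H : VisitSub V) (G : V → V → Prop) (hc : H.Compatible G)
    (i j : V) : H.kerM i j ≤ stepM G i j := by
  unfold VisitSub.kerM stepM
  split
  · rename_i h
    obtain ⟨hi, hj, harc⟩ := h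
    have hiff : ∀ w, G i w ↔ H.arcs i w := fun w => hc.2 i w (Or.inl hi)
    have hG : G i j := (hiff j).mpr harc
    have hdeg : outDeg G i = H.outDegH i := by
      unfold outDeg VisitSub.outDegH
      congr 1
      ext w
      simp [hiff w]
    rw [if_pos hG, hdeg]
  · exact stepM_nonneg_s7 G i j

end Aux

/-- The kernel score lower-bounds the PageRank score in any compatible graph, up to the
restart-probability rescaling: `P(v) ≥ P_H(v)·|H|/|G|`, and `P(v) ≥ P_H(v)` when `G` adds
no nodes beyond `H`. -/
theorem stmt_7 {V : Type*} [Fintype V] (α : ℝ) (hα : α ∈ Set.Ioo (0:ℝ) 1)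
    (H : VisitSub V) (hH : H.IsVisit) (G : V → V → Prop) (hc : H.Compatible G)
    (v : V) (hv : v ∈ H.kernel) :
    pagerank α G v ≥ H.kernelScore α v * (H.verts.ncard : ℝ) / (Fintype.card V : ℝ) ∧
    (H.verts = Set.univ → pagerank α G v ≥ H.kernelScore α v) := by
  obtain ⟨hα0, hα1⟩ := hα
  have hαnn : (0:ℝ) ≤ α := hα0.le
  have h1α : (0:ℝ) ≤ 1 - α := by linarith
  have hcard : (0:ℝ) < (Fintype.card V : ℝ) := by
    have : 0 < Fintype.card V := Fintype.card_pos_iff.mpr ⟨v⟩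
    exact_mod_cast this
  have hvV : v ∈ H.verts := hH.1 hv
  have hn : (0:ℝ) < (H.verts.ncard : ℝ) := by
    have : 0 < H.verts.ncard := (Set.ncard_pos (Set.toFinite _)).mpr ⟨v, hvV⟩
    exact_mod_cast this
  set c : ℝ := (Fintype.card V : ℝ)
  set n : ℝ := (H.verts.ncard : ℝ)
  have hker0 : ∀ i j, 0 ≤ H.kerM i j := kerM_nonneg H
  have hstep0 : ∀ i j, 0 ≤ stepM G i j := stepM_nonneg_s7 G
  have hle : ∀ i j, H.kerM i j ≤ stepM G i j := kerM_le_stepM H G hc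
  have hstep1 : ∀ i, ∑ j, stepM G i j ≤ 1 := stepM_rowsum_le_one G
  have hker1 : ∀ i, ∑ j, H.kerM i j ≤ 1 := fun i =>
    le_trans (Finset.sum_le_sum fun j _ => hle i j) (hstep1 i)
  have hpowle : ∀ τ z, (H.kerM ^ τ) z v ≤ (stepM G ^ τ) z v :=
    fun τ z => pow_entry_mono _ _ hker0 hle τ z v
  have hgeo : Summable (fun τ : ℕ => α ^ τ) := summable_geometric_of_lt_one hαnn hα1
  have hgeoc : Summable (fun τ : ℕ => c * α ^ τ) := hgeo.mul_left c
  -- summability of the entrywise series for kerM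
  have hsumker : ∀ z, Summable (fun τ : ℕ => α ^ τ * (H.kerM ^ τ) z v) := by
    intro z
    refine Summable.of_nonneg_of_le
      (fun τ => mul_nonneg (pow_nonneg hαnn τ) (pow_entry_nonneg _ hker0 τ z v))
      (fun τ => ?_) hgeo
    have h1 := pow_entry_le_one _ hker0 hker1 τ z v
    have h2 : (0:ℝ) ≤ α ^ τ := pow_nonneg hαnn τ
    nlinarith
  -- summability of the summed series
  have sum_nonneg_le : ∀ (M : Matrix V V ℝ), (∀ i j, 0 ≤ M i j) → (∀ i, ∑ j, M i j ≤ 1) →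
      Summable (fun τ : ℕ => α ^ τ * ∑ z, (M ^ τ) z v) := by
    intro M h0 h1
    refine Summable.of_nonneg_of_le
      (fun τ => mul_nonneg (pow_nonneg hαnn τ)
        (Finset.sum_nonneg fun z _ => pow_entry_nonneg _ h0 τ z v))
      (fun τ => ?_) hgeoc
    have hb : ∑ z, (M ^ τ) z v ≤ c := by
      calc ∑ z, (M ^ τ) z v ≤ ∑ _z : V, (1:ℝ) :=
            Finset.sum_le_sum fun z _ => pow_entry_le_one _ h0 h1 τ z v
        _ = c := by simp [c]
    have h2 : (0:ℝ) ≤ α ^ τ := pow_nonneg hαnn τ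
    calc α ^ τ * ∑ z, (M ^ τ) z v ≤ α ^ τ * c := mul_le_mul_of_nonneg_left hb h2
      _ = c * α ^ τ := mul_comm _ _
  have hsumF : Summable (fun τ : ℕ => α ^ τ * ∑ z, (H.kerM ^ τ) z v) :=
    sum_nonneg_le _ hker0 hker1
  have hsumFg : Summable (fun τ : ℕ => α ^ τ * ∑ z, (stepM G ^ τ) z v) :=
    sum_nonneg_le _ hstep0 hstep1
  -- compare the two tsums
  have htsum_le : (∑' τ : ℕ, α ^ τ * ∑ z, (H.kerM ^ τ) z v)
      ≤ ∑' τ : ℕ, α ^ τ * ∑ z, (stepM G ^ τ) z v := by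
    refine Summable.tsum_le_tsum (fun τ => ?_) hsumF hsumFg
    exact mul_le_mul_of_nonneg_left (Finset.sum_le_sum fun z _ => hpowle τ z)
      (pow_nonneg hαnn τ)
  -- swap finite sum and tsum
  have hswap : ∑ z, ∑' τ : ℕ, α ^ τ * (H.kerM ^ τ) z v
      = ∑' τ : ℕ, α ^ τ * ∑ z, (H.kerM ^ τ) z v := by
    rw [← Summable.tsum_finsetSum (fun z _ => hsumker z)]
    congr 1
    funext τ
    rw [Finset.mul_sum]
  -- rewrite kernelScore
  have hks : H.kernelScore α v
      = (1 - α) / n * ∑' τ : ℕ, α ^ τ * ∑ z, (H.kerM ^ τ) z v := by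
    unfold VisitSub.kernelScore VisitSub.kernelContrib
    rw [← Finset.mul_sum, hswap]
  set T : ℝ := ∑' τ : ℕ, α ^ τ * ∑ z, (H.kerM ^ τ) z v with hT
  have hTnn : 0 ≤ T := by
    refine tsum_nonneg fun τ => mul_nonneg (pow_nonneg hαnn τ) ?_
    exact Finset.sum_nonneg fun z _ => pow_entry_nonneg _ hker0 τ z v
  have hpr : pagerank α G v = (1 - α) / c * ∑' τ : ℕ, α ^ τ * ∑ z, (stepM G ^ τ) z v := rfl
  have key : H.kernelScore α v * n / c = (1 - α) / c * T := by
    rw [hks]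
    field_simp
  have main : pagerank α G v ≥ H.kernelScore α v * n / c := by
    rw [key, hpr]
    exact mul_le_mul_of_nonneg_left htsum_le (div_nonneg h1α hcard.le)
  refine ⟨main, fun huniv => ?_⟩
  have hnc : n = c := by
    simp only [n, c, huniv, Set.ncard_univ, Nat.card_eq_fintype_card]
  have := main
  rw [hnc, mul_div_assoc, div_self (ne_of_gt hcard), mul_one] at this
  exact this
end

section
/- Let H be a visit subgraph with kernel nodes u, v satisfying both (1) P_H(u) ≥ P_H(v)/(1+ε) and (2) for every frontier node w, Σ_{(w,z)∈H} P_H(z,u) ≥ Σ_{(w,z)∈H} P_H(z,v). Then in every graph G compatible with H, P(u) ≥ P(v)/(1+ε). -/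
open scoped Classical BigOperators

def VisitSub.map {V W : Type*} (f : V → W) (H : VisitSub V) : VisitSub W :=
  ⟨f '' H.verts, fun x y => ∃ a b, H.arcs a b ∧ x = f a ∧ y = f b, f '' H.kernel⟩


section AuxPR

open Finset

lemma pr_subst_pow {W : Type*} [Fintype W] (A : Matrix W W ℝ)
    (h0 : ∀ x y, 0 ≤ A x y) (h1 : ∀ x, ∑ y, A x y ≤ 1) (τ : ℕ) :
    (∀ x y, 0 ≤ (A ^ τ) x y) ∧ (∀ x, ∑ y, (A ^ τ) x y ≤ 1) := by
  induction τ with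
  | zero =>
    constructor
    · intro x y; simp [Matrix.one_apply]; positivity
    · intro x; simp [Matrix.one_apply]
  | succ n ih =>
    constructor
    · intro x y
      rw [pow_succ, Matrix.mul_apply]
      exact Finset.sum_nonneg fun k _ => mul_nonneg (ih.1 x k) (h0 k y)
    · intro x
      rw [pow_succ]
      simp only [Matrix.mul_apply]
      rw [Finset.sum_comm]
      calc ∑ k, ∑ y, (A ^ n) x k * A k y = ∑ k, (A ^ n) x k * ∑ y, A k y := by
            simp [Finset.mul_sum]
        _ ≤ ∑ k, (A ^ n) x k * 1 :=
            Finset.sum_le_sum fun k _ => mul_le_mul_of_nonneg_left (h1 k) (ih.1 x k)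
        _ ≤ 1 := by simpa using ih.2 x

lemma pr_entry_le_one {W : Type*} [Fintype W] (A : Matrix W W ℝ)
    (h0 : ∀ x y, 0 ≤ A x y) (h1 : ∀ x, ∑ y, A x y ≤ 1) (τ : ℕ) (x y : W) :
    (A ^ τ) x y ≤ 1 := by
  have h := pr_subst_pow A h0 h1 τ
  calc (A ^ τ) x y ≤ ∑ w, (A ^ τ) x w :=
        Finset.single_le_sum (fun w _ => h.1 x w) (Finset.mem_univ y)
    _ ≤ 1 := h.2 x

lemma pr_rowbound {T : Type*} [Fintype T] (A : T → T → Prop) (x : T) :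
    ∑ y, (if A x y then 1 / (outDeg A x : ℝ) else 0) ≤ 1 := by
  rw [← Finset.sum_filter, Finset.sum_const, nsmul_eq_mul]
  rcases Nat.eq_zero_or_pos (outDeg A x) with h | h
  · rw [outDeg] at h ⊢; rw [h]; norm_num
  · rw [outDeg]; rw [outDeg] at h
    rw [mul_one_div, div_self (by positivity)]

lemma pr_summable_geom_bdd {α : ℝ} (h0 : 0 ≤ α) (h1 : α < 1) {g : ℕ → ℝ} {C : ℝ}
    (hg0 : ∀ τ, 0 ≤ g τ) (hgC : ∀ τ, g τ ≤ C) : Summable fun τ => α ^ τ * g τ :=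
  Summable.of_nonneg_of_le (fun τ => mul_nonneg (pow_nonneg h0 _) (hg0 τ))
    (fun τ => mul_le_mul_of_nonneg_left (hgC τ) (pow_nonneg h0 _))
    ((summable_geometric_of_lt_one h0 h1).mul_right C)

lemma pr_decomp_pow {W : Type*} [Fintype W] (M K N : Matrix W W ℝ) (S : Set W)
    (hsplit : ∀ y x, x ∈ S → M y x = K y x + N y x)
    (hK : ∀ y x, y ∉ S → K y x = 0) :
    ∀ (τ : ℕ) (z x : W), x ∈ S →
      (M ^ τ) z x = (K ^ τ) z x +
        ∑ t ∈ Finset.range τ, (M ^ t * N * K ^ (τ - 1 - t)) z x := by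
  intro τ
  induction τ with
  | zero => intro z x _; simp
  | succ n ih =>
    intro z x hx
    have e1 : (M ^ (n + 1)) z x = ∑ y, (M ^ n) z y * M y x := by
      rw [pow_succ, Matrix.mul_apply]
    rw [e1]
    have e2 : ∀ y : W, (M ^ n) z y * M y x
        = (M ^ n) z y * K y x + (M ^ n) z y * N y x := by
      intro y; rw [hsplit y x hx, mul_add]
    simp only [e2, Finset.sum_add_distrib]
    have e3 : ∑ y, (M ^ n) z y * N y x = (M ^ n * N) z x := (Matrix.mul_apply).symm
    have e4 : ∀ y : W, (M ^ n) z y * K y x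
        = ((K ^ n) z y + ∑ t ∈ Finset.range n, (M ^ t * N * K ^ (n - 1 - t)) z y) * K y x := by
      intro y
      by_cases hy : y ∈ S
      · rw [ih z y hy]
      · rw [hK y x hy, mul_zero, mul_zero]
    have e5 : ∑ y, (M ^ n) z y * K y x
        = (K ^ (n + 1)) z x + ∑ t ∈ Finset.range n, (M ^ t * N * K ^ (n - t)) z x := by
      simp only [e4, add_mul, Finset.sum_add_distrib, Finset.sum_mul]
      have p1 : ∑ y, (K ^ n) z y * K y x = (K ^ (n + 1)) z x := by
        rw [pow_succ, Matrix.mul_apply]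
      have p2 : ∑ y, ∑ t ∈ Finset.range n, (M ^ t * N * K ^ (n - 1 - t)) z y * K y x
          = ∑ t ∈ Finset.range n, (M ^ t * N * K ^ (n - t)) z x := by
        rw [Finset.sum_comm]
        refine Finset.sum_congr rfl ?_
        intro t ht
        have hs : n - 1 - t + 1 = n - t := by
          have := Finset.mem_range.mp ht; omega
        rw [← Matrix.mul_apply (M := M ^ t * N * K ^ (n - 1 - t)) (N := K),
          mul_assoc, ← pow_succ, hs]
      rw [p1, p2]
    rw [e5, e3, Finset.sum_range_succ]
    have h6 : (M ^ n * N * K ^ (n + 1 - 1 - n)) z x = (M ^ n * N) z x := by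
      norm_num
    rw [h6]
    have h7 : ∀ t ∈ Finset.range n, (M ^ t * N * K ^ (n + 1 - 1 - t)) z x
        = (M ^ t * N * K ^ (n - t)) z x := by
      intro t ht
      have h' : n + 1 - 1 - t = n - t := by omega
      rw [h']
    rw [Finset.sum_congr rfl h7]
    ring

end AuxPR

/-- If (1) `P_H(u) ≥ P_H(v)/(1+ε)` and (2) for every frontier node `w` of `H` the kernel
contributions of `w`'s children to `u` dominate those to `v`, then in every graph `G`
compatible with `H` (possibly on a larger vertex universe) we have `P(u) ≥ P(v)/(1+ε)`. -/
theorem stmt_9 {V : Type*} [Fintype V] (α ε : ℝ) (hα : α ∈ Set.Ioo (0:ℝ) 1) (hε : 0 < ε)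
    (H : VisitSub V) (hH : H.IsVisit) (u v : V)
    (hu : u ∈ H.kernel) (hv : v ∈ H.kernel)
    (h1 : H.kernelScore α u ≥ H.kernelScore α v / (1 + ε))
    (h2 : ∀ w ∈ H.verts \ H.kernel,
        ∑ z ∈ Finset.univ.filter (fun z => H.arcs w z), H.kernelContrib α z u ≥
        ∑ z ∈ Finset.univ.filter (fun z => H.arcs w z), H.kernelContrib α z v)
    (W : Type*) [Fintype W] (f : V ↪ W) (G : W → W → Prop)
    (hc : (H.map f).Compatible G) :
    pagerank α G (f u) ≥ pagerank α G (f v) / (1 + ε) := by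
  obtain ⟨hα0, hα1⟩ := hα
  -- the kernel-restricted and kernel-entering transition matrices on `W`
  set Km : Matrix W W ℝ :=
    fun x y => if x ∈ f '' H.kernel ∧ y ∈ f '' H.kernel then stepM G x y else 0 with hKmdef
  set Nm : Matrix W W ℝ :=
    fun x y => if x ∉ f '' H.kernel ∧ y ∈ f '' H.kernel then stepM G x y else 0 with hNmdef
  -- membership transport
  have hfmem : ∀ x : V, f x ∈ f '' H.kernel ↔ x ∈ H.kernel := by
    intro x
    constructor
    · rintro ⟨a, ha, he⟩; rwa [← f.injective he]
    · intro h; exact ⟨x, h, rfl⟩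
  -- arcs transport
  have harc1 : ∀ a b : V, H.arcs a b → G (f a) (f b) := by
    intro a b h; exact hc.1 _ _ ⟨a, b, h, rfl, rfl⟩
  have harcL : ∀ (a : V) (y : W), a ∈ H.kernel → (G (f a) y ↔ ∃ b, H.arcs a b ∧ y = f b) := by
    intro a y ha
    rw [hc.2 _ _ (Or.inl ⟨a, ha, rfl⟩)]
    constructor
    · rintro ⟨a', b, hab, hfa, hyb⟩
      exact ⟨b, by rw [f.injective hfa]; exact hab, hyb⟩
    · rintro ⟨b, hab, hyb⟩; exact ⟨a, b, hab, rfl, hyb⟩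
  have harcR : ∀ (y : W) (b : V), b ∈ H.kernel → (G y (f b) ↔ ∃ a, H.arcs a b ∧ y = f a) := by
    intro y b hb
    rw [hc.2 _ _ (Or.inr ⟨b, hb, rfl⟩)]
    constructor
    · rintro ⟨a, b', hab, hya, hfb⟩
      exact ⟨a, by rw [f.injective hfb]; exact hab, hya⟩
    · rintro ⟨a, hab, hya⟩; exact ⟨a, b, hab, hya, rfl⟩
  -- out-degrees agree on kernel nodes
  have houtdeg : ∀ a ∈ H.kernel, outDeg G (f a) = H.outDegH a := by
    intro a ha
    have hset : (Finset.univ.filter fun w => G (f a) w)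
        = (Finset.univ.filter fun b => H.arcs a b).map f := by
      ext w
      simp only [Finset.mem_filter, Finset.mem_univ, true_and, Finset.mem_map, harcL a w ha]
      constructor
      · rintro ⟨b, hab, rfl⟩; exact ⟨b, hab, rfl⟩
      · rintro ⟨b, hb, rfl⟩; exact ⟨b, hb, rfl⟩
    rw [outDeg, hset, Finset.card_map]; rfl
  -- kernel matrix transport
  have hKmker : ∀ a b : V, Km (f a) (f b) = H.kerM a b := by
    intro a b
    simp only [hKmdef]
    rw [VisitSub.kerM]
    by_cases hab : a ∈ H.kernel ∧ b ∈ H.kernel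
    · obtain ⟨ha, hb⟩ := hab
      rw [if_pos ⟨(hfmem a).2 ha, (hfmem b).2 hb⟩, stepM]
      by_cases harc : H.arcs a b
      · rw [if_pos (harc1 a b harc), if_pos ⟨ha, hb, harc⟩, houtdeg a ha]
      · rw [if_neg, if_neg (fun h => harc h.2.2)]
        rw [hc.2 _ _ (Or.inl ⟨a, ha, rfl⟩)]
        rintro ⟨a', b', hab', hfa, hfb⟩
        exact harc (by rw [f.injective hfa, f.injective hfb]; exact hab')
    · rw [if_neg, if_neg (fun h => hab ⟨h.1, h.2.1⟩)]
      rintro ⟨hfa, hfb⟩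
      exact hab ⟨(hfmem a).1 hfa, (hfmem b).1 hfb⟩
  have hKmzeroL : ∀ x y : W, x ∉ f '' H.kernel → Km x y = 0 := by
    intro x y hx; simp only [hKmdef]; rw [if_neg (fun h => hx h.1)]
  have hKmzeroR : ∀ x y : W, y ∉ f '' H.kernel → Km x y = 0 := by
    intro x y hy; simp only [hKmdef]; rw [if_neg (fun h => hy h.2)]
  have hsplit : ∀ y x : W, x ∈ f '' H.kernel → stepM G y x = Km y x + Nm y x := by
    intro y x hx
    simp only [hKmdef, hNmdef]
    by_cases hy : y ∈ f '' H.kernel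
    · rw [if_pos ⟨hy, hx⟩, if_neg (fun h => h.1 hy), add_zero]
    · rw [if_neg (fun h => hy h.1), if_pos ⟨hy, hx⟩, zero_add]
  -- nonnegativity and substochasticity
  have hMnn : ∀ x y : W, 0 ≤ stepM G x y := by
    intro x y; rw [stepM]; split <;> positivity
  have hMrow : ∀ x : W, ∑ y, stepM G x y ≤ 1 := by
    intro x; simpa only [stepM] using pr_rowbound G x
  have hKmnn : ∀ x y : W, 0 ≤ Km x y := by
    intro x y; simp only [hKmdef]; split
    · exact hMnn x y
    · exact le_refl _
  have hKmle : ∀ x y : W, Km x y ≤ stepM G x y := by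
    intro x y; simp only [hKmdef]; split
    · exact le_refl _
    · exact hMnn x y
  have hKmrow : ∀ x : W, ∑ y, Km x y ≤ 1 :=
    fun x => le_trans (Finset.sum_le_sum fun y _ => hKmle x y) (hMrow x)
  have hNmnn : ∀ x y : W, 0 ≤ Nm x y := by
    intro x y; simp only [hNmdef]; split
    · exact hMnn x y
    · exact le_refl _
  have hkernn : ∀ a b : V, 0 ≤ H.kerM a b := by
    intro a b; rw [VisitSub.kerM]; split <;> positivity
  have hkerrow : ∀ a : V, ∑ b, H.kerM a b ≤ 1 := by
    intro a
    calc ∑ b, H.kerM a b ≤ ∑ b, (if H.arcs a b then 1 / (H.outDegH a : ℝ) else 0) := by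
          refine Finset.sum_le_sum fun b _ => ?_
          rw [VisitSub.kerM]
          split
          · next h => rw [if_pos h.2.2]
          · split <;> positivity
      _ ≤ 1 := pr_rowbound H.arcs a
  -- power transport
  have hKpow : ∀ (τ : ℕ) (a b : V), (Km ^ τ) (f a) (f b) = (H.kerM ^ τ) a b := by
    intro τ
    induction τ with
    | zero =>
      intro a b
      simp [Matrix.one_apply, f.injective.eq_iff]
    | succ n ih =>
      intro a b
      rw [pow_succ, Matrix.mul_apply, pow_succ, Matrix.mul_apply]
      have hz : ∀ y ∈ Finset.univ, y ∉ Finset.univ.map f →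
          (Km ^ n) (f a) y * Km y (f b) = 0 := by
        intro y _ hy
        have : Km y (f b) = 0 := by
          refine hKmzeroL y (f b) ?_
          rintro ⟨c, _, rfl⟩
          exact hy (by simp)
        rw [this, mul_zero]
      rw [← Finset.sum_subset (Finset.subset_univ _) hz, Finset.sum_map]
      exact Finset.sum_congr rfl fun c _ => by rw [ih a c, hKmker c b]
  have hKsum : ∀ (τ : ℕ) (x : V), ∑ z, (Km ^ τ) z (f x) = ∑ z, (H.kerM ^ τ) z x := by
    intro τ x
    cases τ with
    | zero => simp [Matrix.one_apply]
    | succ n =>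
      have hz : ∀ z ∈ Finset.univ, z ∉ Finset.univ.map f →
          (Km ^ (n + 1)) z (f x) = 0 := by
        intro z _ hz
        rw [pow_succ', Matrix.mul_apply]
        refine Finset.sum_eq_zero fun y _ => ?_
        have : Km z y = 0 := by
          refine hKmzeroL z y ?_
          rintro ⟨c, _, rfl⟩
          exact hz (by simp)
        rw [this, zero_mul]
      rw [← Finset.sum_subset (Finset.subset_univ _) hz, Finset.sum_map]
      exact Finset.sum_congr rfl fun c _ => hKpow (n + 1) c x
  -- bounds on powers
  have PM := pr_subst_pow (stepM G) hMnn hMrow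
  have PK := pr_subst_pow Km hKmnn hKmrow
  have Pker := pr_subst_pow H.kerM hkernn hkerrow
  -- summability facts
  have SMcol : ∀ w : W, Summable (fun t : ℕ => α ^ t * ∑ z, (stepM G ^ t) z w) := by
    intro w
    refine pr_summable_geom_bdd hα0.le hα1 (fun t => Finset.sum_nonneg fun z _ => (PM t).1 z w)
      (fun t => ?_) (C := (Fintype.card W : ℝ))
    calc ∑ z, (stepM G ^ t) z w ≤ ∑ _z : W, (1 : ℝ) :=
          Finset.sum_le_sum fun z _ => pr_entry_le_one (stepM G) hMnn hMrow t z w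
      _ = (Fintype.card W : ℝ) := by simp
  have SKcol : ∀ x : W, Summable (fun t : ℕ => α ^ t * ∑ z, (Km ^ t) z x) := by
    intro x
    refine pr_summable_geom_bdd hα0.le hα1 (fun t => Finset.sum_nonneg fun z _ => (PK t).1 z x)
      (fun t => ?_) (C := (Fintype.card W : ℝ))
    calc ∑ z, (Km ^ t) z x ≤ ∑ _z : W, (1 : ℝ) :=
          Finset.sum_le_sum fun z _ => pr_entry_le_one Km hKmnn hKmrow t z x
      _ = (Fintype.card W : ℝ) := by simp
  have SKent : ∀ y x : W, Summable (fun s : ℕ => α ^ s * (Km ^ s) y x) := by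
    intro y x
    exact pr_summable_geom_bdd hα0.le hα1 (fun s => (PK s).1 y x)
      (fun s => pr_entry_le_one Km hKmnn hKmrow s y x) (C := (1 : ℝ))
  have Skerent : ∀ a b : V, Summable (fun s : ℕ => α ^ s * (H.kerM ^ s) a b) := by
    intro a b
    exact pr_summable_geom_bdd hα0.le hα1 (fun s => (Pker s).1 a b)
      (fun s => pr_entry_le_one H.kerM hkernn hkerrow s a b) (C := (1 : ℝ))
  -- the decomposition of pagerank into kernel and non-kernel parts
  have hdec := pr_decomp_pow (stepM G) Km Nm (f '' H.kernel) hsplit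
    (fun y x hy => hKmzeroL y x hy)
  set D : ℕ → V → ℝ :=
    fun τ x => ∑ z, ∑ t ∈ Finset.range τ, (stepM G ^ t * Nm * Km ^ (τ - 1 - t)) z (f x)
    with hDdef
  have hdecS : ∀ (τ : ℕ) (x : V), x ∈ H.kernel →
      ∑ z, (stepM G ^ τ) z (f x) = ∑ z, (Km ^ τ) z (f x) + D τ x := by
    intro τ x hx
    simp only [hDdef]
    rw [← Finset.sum_add_distrib]
    exact Finset.sum_congr rfl fun z _ => hdec τ z (f x) ⟨x, hx, rfl⟩
  have SND : ∀ x : V, x ∈ H.kernel → Summable (fun τ : ℕ => α ^ τ * D τ x) := by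
    intro x hx
    refine ((SMcol (f x)).sub (SKcol (f x))).congr fun τ => ?_
    rw [hdecS τ x hx]; ring
  have hpage : ∀ x : V, x ∈ H.kernel →
      pagerank α G (f x) = (1 - α) / (Fintype.card W : ℝ) *
        ((∑' τ : ℕ, α ^ τ * ∑ z, (Km ^ τ) z (f x)) + ∑' τ : ℕ, α ^ τ * D τ x) := by
    intro x hx
    rw [pagerank]
    congr 1
    rw [← Summable.tsum_add (SKcol (f x)) (SND x hx)]
    exact tsum_congr fun τ => by rw [hdecS τ x hx, mul_add]
  have hKS : ∀ x : V, (∑' τ : ℕ, α ^ τ * ∑ z, (Km ^ τ) z (f x))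
      = ∑' τ : ℕ, α ^ τ * ∑ z, (H.kerM ^ τ) z x := by
    intro x
    exact tsum_congr fun τ => by rw [hKsum τ x]
  have hscore : ∀ x : V, H.kernelScore α x
      = (1 - α) / (H.verts.ncard : ℝ) * ∑' τ : ℕ, α ^ τ * ∑ z, (H.kerM ^ τ) z x := by
    intro x
    rw [VisitSub.kernelScore]
    simp only [VisitSub.kernelContrib]
    rw [← Finset.mul_sum]
    congr 1
    rw [← Summable.tsum_finsetSum (fun z _ => Skerent z x)]
    exact tsum_congr fun τ => (Finset.mul_sum _ _ _).symm
  -- expansion of the triple matrix product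
  have hmulexp : ∀ (t s : ℕ) (x : V), ∑ z, (stepM G ^ t * Nm * Km ^ s) z (f x)
      = ∑ w, ∑ y, (∑ z, (stepM G ^ t) z w) * (Nm w y * (Km ^ s) y (f x)) := by
    intro t s x
    calc ∑ z, (stepM G ^ t * Nm * Km ^ s) z (f x)
        = ∑ z, ∑ y, ∑ w, (stepM G ^ t) z w * Nm w y * (Km ^ s) y (f x) := by
          refine Finset.sum_congr rfl fun z _ => ?_
          simp only [Matrix.mul_apply, Finset.sum_mul]
      _ = ∑ y, ∑ z, ∑ w, (stepM G ^ t) z w * Nm w y * (Km ^ s) y (f x) := Finset.sum_comm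
      _ = ∑ y, ∑ w, ∑ z, (stepM G ^ t) z w * Nm w y * (Km ^ s) y (f x) :=
          Finset.sum_congr rfl fun y _ => Finset.sum_comm
      _ = ∑ w, ∑ y, ∑ z, (stepM G ^ t) z w * Nm w y * (Km ^ s) y (f x) := Finset.sum_comm
      _ = ∑ w, ∑ y, (∑ z, (stepM G ^ t) z w) * (Nm w y * (Km ^ s) y (f x)) := by
          refine Finset.sum_congr rfl fun w _ => Finset.sum_congr rfl fun y _ => ?_
          rw [Finset.sum_mul]
          exact Finset.sum_congr rfl fun z _ => by ring
  -- pointwise rearrangement of the non-kernel part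
  have hptwise : ∀ (x : V) (τ : ℕ),
      α ^ τ * D τ x = ∑ w, ∑ y, (α * Nm w y *
        ∑ t ∈ Finset.range τ, (α ^ t * ∑ z, (stepM G ^ t) z w) *
          (α ^ (τ - 1 - t) * (Km ^ (τ - 1 - t)) y (f x))) := by
    intro x τ
    have hterm : ∀ t : ℕ, t < τ → ∀ w y : W,
        α ^ τ * ((∑ z, (stepM G ^ t) z w) * (Nm w y * (Km ^ (τ - 1 - t)) y (f x)))
        = α * Nm w y * ((α ^ t * ∑ z, (stepM G ^ t) z w) *
            (α ^ (τ - 1 - t) * (Km ^ (τ - 1 - t)) y (f x))) := by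
      intro t ht w y
      have hτ : α ^ τ = α ^ t * α ^ (τ - 1 - t) * α := by
        have he : α ^ (t + (τ - 1 - t) + 1) = α ^ t * α ^ (τ - 1 - t) * α := by
          rw [pow_add, pow_add, pow_one]
        rw [← he]
        congr 1
        omega
      rw [hτ]; ring
    calc α ^ τ * D τ x
        = ∑ t ∈ Finset.range τ, α ^ τ *
            ∑ z, (stepM G ^ t * Nm * Km ^ (τ - 1 - t)) z (f x) := by
          simp only [hDdef]
          rw [Finset.sum_comm, Finset.mul_sum]
      _ = ∑ t ∈ Finset.range τ, ∑ w, ∑ y, α ^ τ *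
            ((∑ z, (stepM G ^ t) z w) * (Nm w y * (Km ^ (τ - 1 - t)) y (f x))) := by
          refine Finset.sum_congr rfl fun t _ => ?_
          rw [hmulexp t (τ - 1 - t) x, Finset.mul_sum]
          exact Finset.sum_congr rfl fun w _ => by rw [Finset.mul_sum]
      _ = ∑ t ∈ Finset.range τ, ∑ w, ∑ y, α * Nm w y *
            ((α ^ t * ∑ z, (stepM G ^ t) z w) *
              (α ^ (τ - 1 - t) * (Km ^ (τ - 1 - t)) y (f x))) :=
          Finset.sum_congr rfl fun t ht => Finset.sum_congr rfl fun w _ =>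
            Finset.sum_congr rfl fun y _ => hterm t (Finset.mem_range.mp ht) w y
      _ = ∑ w, ∑ t ∈ Finset.range τ, ∑ y, α * Nm w y *
            ((α ^ t * ∑ z, (stepM G ^ t) z w) *
              (α ^ (τ - 1 - t) * (Km ^ (τ - 1 - t)) y (f x))) := Finset.sum_comm
      _ = ∑ w, ∑ y, ∑ t ∈ Finset.range τ, α * Nm w y *
            ((α ^ t * ∑ z, (stepM G ^ t) z w) *
              (α ^ (τ - 1 - t) * (Km ^ (τ - 1 - t)) y (f x))) :=
          Finset.sum_congr rfl fun w _ => Finset.sum_comm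
      _ = _ := Finset.sum_congr rfl fun w _ => Finset.sum_congr rfl fun y _ =>
          (Finset.mul_sum _ _ _).symm
  -- Cauchy product for each pair (w, y)
  have hcauchy : ∀ (w y : W) (x : V),
      Summable (fun τ : ℕ => ∑ t ∈ Finset.range τ,
        (α ^ t * ∑ z, (stepM G ^ t) z w) *
          (α ^ (τ - 1 - t) * (Km ^ (τ - 1 - t)) y (f x))) ∧
      (∑' τ : ℕ, ∑ t ∈ Finset.range τ,
        (α ^ t * ∑ z, (stepM G ^ t) z w) *
          (α ^ (τ - 1 - t) * (Km ^ (τ - 1 - t)) y (f x)))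
      = (∑' t : ℕ, α ^ t * ∑ z, (stepM G ^ t) z w) *
        (∑' s : ℕ, α ^ s * (Km ^ s) y (f x)) := by
    intro w y x
    set a : ℕ → ℝ := fun t => α ^ t * ∑ z, (stepM G ^ t) z w with ha
    set b : ℕ → ℝ := fun s => α ^ s * (Km ^ s) y (f x) with hb
    have hsa : Summable a := SMcol w
    have hsb : Summable b := SKent y (f x)
    have hna : Summable (fun t => ‖a t‖) := hsa.congr fun t =>
      (Real.norm_of_nonneg (mul_nonneg (pow_nonneg hα0.le t)
        (Finset.sum_nonneg fun z _ => (PM t).1 z w))).symm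
    have hnb : Summable (fun s => ‖b s‖) := hsb.congr fun s =>
      (Real.norm_of_nonneg (mul_nonneg (pow_nonneg hα0.le s) ((PK s).1 y (f x)))).symm
    have hcs : Summable (fun n : ℕ => ∑ k ∈ Finset.range (n + 1), a k * b (n - k)) :=
      summable_sum_mul_range_of_summable_norm' hna hsa hnb hsb
    have hc1 : ∀ n : ℕ, (∑ t ∈ Finset.range (n + 1), a t * b (n + 1 - 1 - t))
        = ∑ k ∈ Finset.range (n + 1), a k * b (n - k) := by
      intro n
      refine Finset.sum_congr rfl fun t _ => ?_
      have he : n + 1 - 1 - t = n - t := by omega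
      rw [he]
    have hsc : Summable (fun τ : ℕ => ∑ t ∈ Finset.range τ, a t * b (τ - 1 - t)) := by
      rw [← summable_nat_add_iff 1]
      exact hcs.congr fun n => (hc1 n).symm
    refine ⟨hsc, ?_⟩
    rw [Summable.tsum_eq_zero_add hsc]
    simp only [Finset.range_zero, Finset.sum_empty, zero_add]
    rw [tsum_congr hc1, ← tsum_mul_tsum_eq_tsum_sum_range_of_summable_norm hna hnb]
  -- closed form for the non-kernel part
  have hND : ∀ x : V, x ∈ H.kernel →
      (∑' τ : ℕ, α ^ τ * D τ x) = ∑ w, ∑ y, α * Nm w y *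
        ((∑' t : ℕ, α ^ t * ∑ z, (stepM G ^ t) z w) *
          (∑' s : ℕ, α ^ s * (Km ^ s) y (f x))) := by
    intro x _
    calc (∑' τ : ℕ, α ^ τ * D τ x)
        = ∑' τ : ℕ, ∑ w, ∑ y, (α * Nm w y *
            ∑ t ∈ Finset.range τ, (α ^ t * ∑ z, (stepM G ^ t) z w) *
              (α ^ (τ - 1 - t) * (Km ^ (τ - 1 - t)) y (f x))) := tsum_congr (hptwise x)
      _ = ∑ w, ∑' τ : ℕ, ∑ y, (α * Nm w y *
            ∑ t ∈ Finset.range τ, (α ^ t * ∑ z, (stepM G ^ t) z w) *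
              (α ^ (τ - 1 - t) * (Km ^ (τ - 1 - t)) y (f x))) :=
          Summable.tsum_finsetSum fun w _ => summable_sum fun y _ => ((hcauchy w y x).1).mul_left _
      _ = ∑ w, ∑ y, ∑' τ : ℕ, (α * Nm w y *
            ∑ t ∈ Finset.range τ, (α ^ t * ∑ z, (stepM G ^ t) z w) *
              (α ^ (τ - 1 - t) * (Km ^ (τ - 1 - t)) y (f x))) :=
          Finset.sum_congr rfl fun w _ => Summable.tsum_finsetSum fun y _ => ((hcauchy w y x).1).mul_left _
      _ = _ := Finset.sum_congr rfl fun w _ => Finset.sum_congr rfl fun y _ => by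
          rw [tsum_mul_left, (hcauchy w y x).2]
  -- nonnegativity of the building blocks
  have hQ0 : ∀ w : W, 0 ≤ ∑' t : ℕ, α ^ t * ∑ z, (stepM G ^ t) z w := fun w =>
    tsum_nonneg fun t => mul_nonneg (pow_nonneg hα0.le t)
      (Finset.sum_nonneg fun z _ => (PM t).1 z w)
  have hE0 : ∀ (y : W) (x : V), 0 ≤ ∑' s : ℕ, α ^ s * (Km ^ s) y (f x) := fun y x =>
    tsum_nonneg fun s => mul_nonneg (pow_nonneg hα0.le s) ((PK s).1 y (f x))
  have hEtrans : ∀ b x : V, (∑' s : ℕ, α ^ s * (Km ^ s) (f b) (f x))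
      = ∑' s : ℕ, α ^ s * (H.kerM ^ s) b x := fun b x =>
    tsum_congr fun s => by rw [hKpow s b x]
  -- positive constants
  have hm : (0 : ℝ) < (H.verts.ncard : ℝ) := by
    have hfin : H.verts.Finite := Set.toFinite _
    have : 0 < H.verts.ncard := (Set.ncard_pos hfin).2 ⟨u, hH.1 hu⟩
    exact_mod_cast this
  have hcH : (0 : ℝ) < (1 - α) / (H.verts.ncard : ℝ) := div_pos (by linarith) hm
  -- the per-frontier-node comparison
  have hwineq : ∀ w : W,
      ∑ y, Nm w y * (∑' s : ℕ, α ^ s * (Km ^ s) y (f v))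
      ≤ ∑ y, Nm w y * (∑' s : ℕ, α ^ s * (Km ^ s) y (f u)) := by
    intro w
    by_cases hw : ∃ w' ∈ H.verts \ H.kernel, f w' = w
    · obtain ⟨w', hw', rfl⟩ := hw
      have hnz : ∀ y : W, Nm (f w') y ≠ 0 →
          y ∈ (Finset.univ.filter fun b => H.arcs w' b).map f := by
        intro y hy
        simp only [hNmdef] at hy
        by_cases hcond : f w' ∉ f '' H.kernel ∧ y ∈ f '' H.kernel
        · obtain ⟨b, hbk, rfl⟩ := hcond.2
          have hG : G (f w') (f b) := by
            by_contra hg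
            apply hy
            rw [if_pos hcond, stepM, if_neg hg]
          obtain ⟨a, hab, hfa⟩ := (harcR (f w') b hbk).1 hG
          have hwb : H.arcs w' b := by rwa [f.injective hfa]
          exact Finset.mem_map.2 ⟨b, Finset.mem_filter.2 ⟨Finset.mem_univ b, hwb⟩, rfl⟩
        · exact (hy (if_neg hcond)).elim
      have hfw'nk : f w' ∉ f '' H.kernel := fun h => hw'.2 ((hfmem w').1 h)
      have hval : ∀ b : V, H.arcs w' b → Nm (f w') (f b) = 1 / (outDeg G (f w') : ℝ) := by
        intro b hb
        have hbk : b ∈ H.kernel := (hH.2.2.2 w' b hb).resolve_left hw'.2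
        simp only [hNmdef]
        rw [if_pos ⟨hfw'nk, (hfmem b).2 hbk⟩, stepM, if_pos (harc1 w' b hb)]
      have hsum : ∀ x : V, ∑ y, Nm (f w') y * (∑' s : ℕ, α ^ s * (Km ^ s) y (f x))
          = (1 / (outDeg G (f w') : ℝ)) *
            ∑ b ∈ Finset.univ.filter (fun b => H.arcs w' b),
              (∑' s : ℕ, α ^ s * (H.kerM ^ s) b x) := by
        intro x
        have hzero : ∀ y ∈ Finset.univ,
            y ∉ (Finset.univ.filter fun b => H.arcs w' b).map f →
            Nm (f w') y * (∑' s : ℕ, α ^ s * (Km ^ s) y (f x)) = 0 := by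
          intro y _ hy
          rcases eq_or_ne (Nm (f w') y) 0 with h0 | h0
          · rw [h0, zero_mul]
          · exact absurd (hnz y h0) hy
        rw [← Finset.sum_subset (Finset.subset_univ _) hzero, Finset.sum_map,
          Finset.mul_sum]
        refine Finset.sum_congr rfl fun b hb => ?_
        rw [hval b (Finset.mem_filter.mp hb).2, hEtrans b x]
      rw [hsum u, hsum v]
      refine mul_le_mul_of_nonneg_left ?_ (by positivity)
      have hrw : ∀ x : V, ∑ b ∈ Finset.univ.filter (fun b => H.arcs w' b),
          H.kernelContrib α b x
          = (1 - α) / (H.verts.ncard : ℝ) *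
            ∑ b ∈ Finset.univ.filter (fun b => H.arcs w' b),
              (∑' s : ℕ, α ^ s * (H.kerM ^ s) b x) := by
        intro x
        rw [Finset.mul_sum]
        exact Finset.sum_congr rfl fun b _ => rfl
      have h2' := h2 w' hw'
      rw [hrw u, hrw v] at h2'
      exact le_of_mul_le_mul_left h2' hcH
    · have hz : ∀ y, Nm w y = 0 := by
        intro y
        by_contra h0
        simp only [hNmdef] at h0
        by_cases hcond : w ∉ f '' H.kernel ∧ y ∈ f '' H.kernel
        · obtain ⟨b, hbk, rfl⟩ := hcond.2
          have hG : G w (f b) := by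
            by_contra hg
            apply h0
            rw [if_pos hcond, stepM, if_neg hg]
          obtain ⟨a, hab, rfl⟩ := (harcR w b hbk).1 hG
          have haverts : a ∈ H.verts := (hH.2.1 a b hab).1
          have hank : a ∉ H.kernel := fun hk => hcond.1 ⟨a, hk, rfl⟩
          exact hw ⟨a, ⟨haverts, hank⟩, rfl⟩
        · exact h0 (if_neg hcond)
      simp [hz]
  -- comparison of the non-kernel parts
  have hDuv : (∑' τ : ℕ, α ^ τ * D τ v) ≤ ∑' τ : ℕ, α ^ τ * D τ u := by
    rw [hND u hu, hND v hv]
    refine Finset.sum_le_sum fun w _ => ?_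
    have hrew : ∀ x : V, ∑ y, α * Nm w y *
        ((∑' t : ℕ, α ^ t * ∑ z, (stepM G ^ t) z w) *
          (∑' s : ℕ, α ^ s * (Km ^ s) y (f x)))
        = (α * ∑' t : ℕ, α ^ t * ∑ z, (stepM G ^ t) z w) *
          ∑ y, Nm w y * (∑' s : ℕ, α ^ s * (Km ^ s) y (f x)) := by
      intro x
      rw [Finset.mul_sum]
      exact Finset.sum_congr rfl fun y _ => by ring
    rw [hrew u, hrew v]
    exact mul_le_mul_of_nonneg_left (hwineq w) (mul_nonneg hα0.le (hQ0 w))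
  have hDv0 : 0 ≤ ∑' τ : ℕ, α ^ τ * D τ v := by
    rw [hND v hv]
    refine Finset.sum_nonneg fun w _ => Finset.sum_nonneg fun y _ => ?_
    exact mul_nonneg (mul_nonneg hα0.le (hNmnn w y)) (mul_nonneg (hQ0 w) (hE0 y v))
  -- comparison of the kernel parts
  have hKuv : (∑' τ : ℕ, α ^ τ * ∑ z, (H.kerM ^ τ) z v) / (1 + ε)
      ≤ ∑' τ : ℕ, α ^ τ * ∑ z, (H.kerM ^ τ) z u := by
    have h1' := h1
    rw [hscore u, hscore v, mul_div_assoc] at h1'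
    exact le_of_mul_le_mul_left h1' hcH
  -- assembly
  have hC0 : (0 : ℝ) ≤ (1 - α) / (Fintype.card W : ℝ) :=
    div_nonneg (by linarith) (Nat.cast_nonneg _)
  rw [ge_iff_le, hpage u hu, hpage v hv, hKS u, hKS v, mul_div_assoc]
  refine mul_le_mul_of_nonneg_left ?_ hC0
  rw [add_div]
  exact add_le_add hKuv (le_trans (div_le_self hDv0 (by linarith)) hDuv)
end

section
/- The expected number of graph queries performed by one call to SampleNode is less than 2/(1-α), and the probability that m independent calls to SampleNode jointly perform more than 2(1+Δ)m/(1-α) queries is less than exp(-(m/2)·Δ²/(1+Δ)). -/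
open MeasureTheory ProbabilityTheory

open scoped ENNReal

/-!
The number `N` of loop iterations of one call is geometric, `P(N = k + 1) = αᵏ (1 - α)`, so
`E N = 1 / (1 - α)` and `E e^{τN} = (1 - α) e^τ / (1 - α e^τ)` when `α e^τ < 1`; the bound on the
expected number of queries follows from `Q ≤ 2N - 1`.

For the tail, `∑ Q > 2(1 + Δ)m / (1 - α)` forces `∑ N ≥ m ((1 + Δ) / (1 - α) + 1 / 2)`. The
Chernoff bound for the independent sum `∑ N`, at the parameter `e^τ = (Δ + α) / (α (1 + Δ))` that
is optimal for the threshold `(1 + Δ)m / (1 - α)`, gives per call the exponent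
`-τ (Δ + α) / (1 - α) - τ / 2 + log (1 + Δ)`. Now `τ ≥ 1 - e^{-τ}` yields `τ (Δ + α) / (1 - α) ≥ Δ`,
and `t ≤ sinh t` at `t = log (1 + Δ)` yields `log (1 + Δ) ≤ Δ - Δ² / (2 (1 + Δ))`; the leftover
`-τ / 2 < 0` makes the bound strict.
-/

lemma Real.log_le_sub_inv_div_two {x : ℝ} (hx : 1 ≤ x) : Real.log x ≤ (x - x⁻¹) / 2 := by
  have h := Real.self_le_sinh_iff.mpr (Real.log_nonneg hx)
  rwa [Real.sinh_eq, Real.exp_neg, Real.exp_log (by linarith)] at h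

noncomputable def geomMgf (α τ : ℝ) : ℝ := (1 - α) * Real.exp τ / (1 - α * Real.exp τ)

lemma geomMgf_nonneg {α τ : ℝ} (hα1 : α ≤ 1) (hτ : α * Real.exp τ < 1) : 0 ≤ geomMgf α τ :=
  div_nonneg (mul_nonneg (by linarith) (Real.exp_pos τ).le) (by linarith)

lemma exists_exp_neg_mul_mul_geomMgf_lt {α Δ : ℝ} (hα0 : 0 < α) (hα1 : α < 1) (hΔ : 0 < Δ) :
    ∃ τ, 0 ≤ τ ∧ α * Real.exp τ < 1 ∧
      Real.exp (-τ * ((1 + Δ) / (1 - α) + 1 / 2)) * geomMgf α τ <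
        Real.exp (-(Δ ^ 2 / (2 * (1 + Δ)))) := by
  have h1α : 0 < 1 - α := by linarith
  set R := (Δ + α) / (α * (1 + Δ)) with hR
  have hR1 : 1 < R := by rw [hR, one_lt_div (by positivity)]; nlinarith
  set τ := Real.log R
  have hτ : 0 < τ := Real.log_pos hR1
  have hexp : Real.exp τ = R := Real.exp_log (by linarith)
  have hαR : α * R = (Δ + α) / (1 + Δ) := by rw [hR]; field_simp
  have hαR1 : α * R < 1 := by rw [hαR, div_lt_one (by positivity)]; linarith
  refine ⟨τ, hτ.le, hexp ▸ hαR1, ?_⟩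
  have hmgf : geomMgf α τ = Real.exp (Real.log (1 + Δ) + τ) := by
    have h1 : 1 - (Δ + α) / (1 + Δ) = (1 - α) / (1 + Δ) := by field_simp; ring
    rw [Real.exp_add, Real.exp_log (by positivity), geomMgf, hexp, hαR, h1]
    field_simp
  have hτ_ge : Δ ≤ τ * ((Δ + α) / (1 - α)) := by
    have h := mul_le_mul_of_nonneg_right (Real.one_sub_inv_le_log_of_pos (by linarith : 0 < R))
      (by positivity : 0 ≤ (Δ + α) / (1 - α))
    have he : (1 - R⁻¹) * ((Δ + α) / (1 - α)) = Δ := by rw [hR]; field_simp; ring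
    linarith
  have hlog : Real.log (1 + Δ) ≤ Δ - Δ ^ 2 / (2 * (1 + Δ)) := by
    have h := Real.log_le_sub_inv_div_two (by linarith : 1 ≤ 1 + Δ)
    have he : ((1 + Δ) - (1 + Δ)⁻¹) / 2 = Δ - Δ ^ 2 / (2 * (1 + Δ)) := by field_simp; ring
    linarith
  have hsplit : -τ * ((1 + Δ) / (1 - α) + 1 / 2) + τ = -(τ * ((Δ + α) / (1 - α))) - τ / 2 := by
    field_simp; ring
  rw [hmgf, ← Real.exp_add, Real.exp_lt_exp]
  linarith

lemma setOf_lt_sum_subset_of_le_two_mul_sub_one {ι Ω : Type*} [Fintype ι] {N Q : ι → Ω → ℕ}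
    (hQ : ∀ i ω, (Q i ω : ℝ) ≤ 2 * N i ω - 1) (c : ℝ) :
    {ω | Fintype.card ι * (2 * c) < ∑ i, (Q i ω : ℝ)} ⊆
      {ω | Fintype.card ι * (c + 1 / 2) ≤ ∑ i, (N i ω : ℝ)} := by
  intro ω hω
  have h := Finset.sum_le_sum fun i (_ : i ∈ Finset.univ) => hQ i ω
  rw [Finset.sum_sub_distrib, ← Finset.mul_sum, Finset.sum_const, Finset.card_univ,
    nsmul_one] at h
  simp only [Set.mem_ofPred_eq] at hω ⊢
  linarith

def HasGeomTail {Ω : Type*} [MeasurableSpace Ω] (μ : Measure Ω) (X : Ω → ℕ) (α : ℝ) : Prop :=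
  ∀ t : ℕ, μ {ω | t < X ω} = ENNReal.ofReal (α ^ t)

namespace HasGeomTail

variable {Ω : Type*} [MeasurableSpace Ω] {μ : Measure Ω} [IsProbabilityMeasure μ] {X : Ω → ℕ}
  {α : ℝ}

lemma measure_eq_zero (hg : HasGeomTail μ X α) (hX : Measurable X) : μ {ω | X ω = 0} = 0 := by
  have h : {ω | X ω = 0} = {ω | 0 < X ω}ᶜ := by ext ω; simp [Nat.pos_iff_ne_zero]
  have hms : MeasurableSet {ω | 0 < X ω} := hX MeasurableSet.of_discrete
  rw [h, measure_compl hms (measure_ne_top μ _), hg 0]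
  simp

lemma measure_eq_succ (hg : HasGeomTail μ X α) (hX : Measurable X) (hα0 : 0 ≤ α) (k : ℕ) :
    μ {ω | X ω = k + 1} = ENNReal.ofReal (α ^ k * (1 - α)) := by
  have h : {ω | X ω = k + 1} = {ω | k < X ω} \ {ω | k + 1 < X ω} := by
    ext ω; simp only [Set.mem_ofPred_eq, Set.mem_sdiff]; omega
  have hsub : {ω | k + 1 < X ω} ⊆ {ω | k < X ω} := fun ω hω => Nat.lt_of_succ_lt hω
  have hms : MeasurableSet {ω | k + 1 < X ω} := hX MeasurableSet.of_discrete
  rw [h, measure_sdiff hsub hms.nullMeasurableSet (measure_ne_top μ _), hg k, hg (k + 1),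
    ← ENNReal.ofReal_sub _ (pow_nonneg hα0 (k + 1))]
  ring_nf

lemma lintegral_comp_eq_tsum (hg : HasGeomTail μ X α) (hX : Measurable X) (hα0 : 0 ≤ α)
    (f : ℕ → ℝ≥0∞) :
    ∫⁻ ω, f (X ω) ∂μ = ∑' k : ℕ, f (k + 1) * ENNReal.ofReal (α ^ k * (1 - α)) := by
  have hmap (n : ℕ) : μ.map X {n} = μ {ω | X ω = n} :=
    Measure.map_apply hX (measurableSet_singleton n)
  rw [← lintegral_map (f := f) Measurable.of_discrete hX, lintegral_countable' f,
    tsum_eq_zero_add' ENNReal.summable]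
  simp only [hmap, hg.measure_eq_zero hX, mul_zero, zero_add, hg.measure_eq_succ hX hα0]

lemma integrable_and_integral_comp_eq (hg : HasGeomTail μ X α) (hX : Measurable X) (hα0 : 0 ≤ α)
    (hα1 : α ≤ 1) {f : ℕ → ℝ} (hf : ∀ n, 0 ≤ f n) {s : ℝ}
    (hs : HasSum (fun k : ℕ => f (k + 1) * (α ^ k * (1 - α))) s) :
    Integrable (fun ω => f (X ω)) μ ∧ ∫ ω, f (X ω) ∂μ = s := by
  have hterm (k : ℕ) : 0 ≤ f (k + 1) * (α ^ k * (1 - α)) := by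
    have := hf (k + 1); have : 0 ≤ 1 - α := by linarith
    positivity
  have hlint : ∫⁻ ω, ENNReal.ofReal (f (X ω)) ∂μ = ENNReal.ofReal s := by
    rw [hg.lintegral_comp_eq_tsum hX hα0 (fun n => ENNReal.ofReal (f n)), ← hs.tsum_eq,
      ENNReal.ofReal_tsum_of_nonneg hterm hs.summable]
    simp_rw [ENNReal.ofReal_mul (hf _)]
  have hmeas : AEStronglyMeasurable (fun ω => f (X ω)) μ :=
    (Measurable.of_discrete.comp hX).aestronglyMeasurable
  refine ⟨⟨hmeas, ?_⟩, ?_⟩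
  · rw [hasFiniteIntegral_iff_ofReal (ae_of_all _ fun ω => hf _), hlint]
    exact ENNReal.ofReal_lt_top
  · rw [integral_eq_lintegral_of_nonneg_ae (ae_of_all _ fun ω => hf _) hmeas, hlint,
      ENNReal.toReal_ofReal (hs.nonneg hterm)]

lemma integrable_and_integral_natCast_eq (hg : HasGeomTail μ X α) (hX : Measurable X)
    (hα0 : 0 ≤ α) (hα1 : α < 1) :
    Integrable (fun ω => (X ω : ℝ)) μ ∧ ∫ ω, (X ω : ℝ) ∂μ = (1 - α)⁻¹ := by
  refine hg.integrable_and_integral_comp_eq hX hα0 hα1.le (fun n => n.cast_nonneg) ?_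
  have h := (hasSum_choose_mul_geometric_of_norm_lt_one 1
    (by rwa [Real.norm_eq_abs, abs_of_nonneg hα0] : ‖α‖ < 1)).mul_right (1 - α)
  have h1α : 1 - α ≠ 0 := by linarith
  rw [show (1 - α)⁻¹ = 1 / (1 - α) ^ (1 + 1) * (1 - α) by field_simp]
  exact h.congr_fun fun k => by simp only [Nat.choose_one_right]; push_cast; ring

lemma integrable_exp_mul_and_mgf_eq (hg : HasGeomTail μ X α) (hX : Measurable X) (hα0 : 0 ≤ α)
    (hα1 : α ≤ 1) {τ : ℝ} (hτ : α * Real.exp τ < 1) :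
    Integrable (fun ω => Real.exp (τ * X ω)) μ ∧
      mgf (fun ω => (X ω : ℝ)) μ τ = geomMgf α τ := by
  refine hg.integrable_and_integral_comp_eq (f := fun n : ℕ => Real.exp (τ * n)) hX hα0 hα1
    (fun n => (Real.exp_pos _).le) ?_
  have h := (hasSum_geometric_of_lt_one (by positivity) hτ).mul_left ((1 - α) * Real.exp τ)
  rw [geomMgf, div_eq_mul_inv]
  refine h.congr_fun fun k => ?_
  push_cast
  rw [mul_add, Real.exp_add, mul_one, mul_comm τ, Real.exp_nat_mul, mul_pow]
  ring

lemma integral_lt_of_le_two_mul_sub_one (hg : HasGeomTail μ X α) (hX : Measurable X)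
    (hα0 : 0 ≤ α) (hα1 : α < 1) {Y : Ω → ℕ} (hY : ∀ ω, (Y ω : ℝ) ≤ 2 * X ω - 1) :
    ∫ ω, (Y ω : ℝ) ∂μ < 2 / (1 - α) := by
  obtain ⟨hXint, hXmean⟩ := hg.integrable_and_integral_natCast_eq hX hα0 hα1
  have hint : Integrable (fun ω => 2 * (X ω : ℝ) - 1) μ :=
    (hXint.const_mul 2).sub (integrable_const 1)
  calc ∫ ω, (Y ω : ℝ) ∂μ ≤ ∫ ω, (2 * (X ω : ℝ) - 1) ∂μ :=
        integral_mono_of_nonneg (ae_of_all _ fun ω => (Y ω).cast_nonneg) hint (ae_of_all _ hY)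
    _ = 2 * (1 - α)⁻¹ - 1 := by
        rw [integral_sub (hXint.const_mul 2) (integrable_const 1), integral_const_mul, hXmean]
        simp
    _ < 2 / (1 - α) := by rw [div_eq_mul_inv]; linarith

lemma measureReal_card_mul_le_sum_le {ι : Type*} [Fintype ι] {N : ι → Ω → ℕ}
    (hg : ∀ i, HasGeomTail μ (N i) α) (hN : ∀ i, Measurable (N i)) (hindep : iIndepFun N μ)
    (hα0 : 0 ≤ α) (hα1 : α ≤ 1) {τ : ℝ} (hτ0 : 0 ≤ τ) (hτ : α * Real.exp τ < 1) (a : ℝ) :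
    μ.real {ω | Fintype.card ι * a ≤ ∑ i, (N i ω : ℝ)} ≤
      (Real.exp (-τ * a) * geomMgf α τ) ^ Fintype.card ι := by
  have hmeas (i : ι) : Measurable fun ω => (N i ω : ℝ) := Measurable.of_discrete.comp (hN i)
  have hindepR : iIndepFun (fun i ω => (N i ω : ℝ)) μ :=
    hindep.comp (fun _ => Nat.cast) fun _ => Measurable.of_discrete
  have hgeom (i : ι) := (hg i).integrable_exp_mul_and_mgf_eq (hN i) hα0 hα1 hτ
  have h := measure_ge_le_exp_mul_mgf (X := ∑ i, fun ω => (N i ω : ℝ)) (Fintype.card ι * a) hτ0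
    (hindepR.integrable_exp_mul_sum hmeas fun i _ => (hgeom i).1)
  rw [hindepR.mgf_sum hmeas, Finset.prod_congr rfl fun i _ => (hgeom i).2, Finset.prod_const,
    Finset.card_univ] at h
  simp only [Finset.sum_apply] at h
  rwa [mul_pow, ← Real.exp_nat_mul, ← mul_assoc, mul_comm _ (-τ), mul_assoc]

end HasGeomTail

/-- Query-cost of SampleNode: if the numbers of loop iterations `N i` of `m` independent
calls are i.i.d. geometric with termination probability `1-α` (so `Pr[N i > t] = α^t`),
and the `i`-th call issues `Q i ≤ 2·N i - 1` queries, then each call performs in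
expectation fewer than `2/(1-α)` queries, and the probability that the `m` calls jointly
perform more than `2(1+Δ)m/(1-α)` queries is less than `exp(-(m/2)·Δ²/(1+Δ))`. -/
theorem stmt_11 {Ω : Type*} [MeasurableSpace Ω] (μ : Measure Ω) [IsProbabilityMeasure μ]
    (α : ℝ) (hα : α ∈ Set.Ioo (0:ℝ) 1) (m : ℕ) (hm : 0 < m)
    (N Q : Fin m → Ω → ℕ)
    (hNmeas : ∀ i, Measurable (N i))
    (hindep : iIndepFun N μ)
    (hgeom : ∀ i (t : ℕ), μ {ω | t < N i ω} = ENNReal.ofReal (α ^ t))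
    (hQ : ∀ i ω, (Q i ω : ℝ) ≤ 2 * (N i ω : ℝ) - 1) :
    (∀ i, ∫ ω, (Q i ω : ℝ) ∂μ < 2 / (1 - α)) ∧
    (∀ Δ : ℝ, 0 < Δ →
      (μ {ω | 2 * (1 + Δ) * (m : ℝ) / (1 - α) < ∑ i, (Q i ω : ℝ)}).toReal <
        Real.exp (-((m : ℝ) / 2) * (Δ ^ 2 / (1 + Δ)))) := by
  obtain ⟨hα0, hα1⟩ := hα
  refine ⟨fun i => HasGeomTail.integral_lt_of_le_two_mul_sub_one (hgeom i) (hNmeas i) hα0.le hα1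
    (hQ i), fun Δ hΔ => ?_⟩
  obtain ⟨τ, hτ0, hτ, hlt⟩ := exists_exp_neg_mul_mul_geomMgf_lt hα0 hα1 hΔ
  set a := (1 + Δ) / (1 - α) + 1 / 2
  have hsub := setOf_lt_sum_subset_of_le_two_mul_sub_one hQ ((1 + Δ) / (1 - α))
  have hchernoff := HasGeomTail.measureReal_card_mul_le_sum_le hgeom hNmeas hindep hα0.le hα1.le
    hτ0 hτ a
  rw [Fintype.card_fin] at hsub hchernoff
  rw [show 2 * (1 + Δ) * (m : ℝ) / (1 - α) = m * (2 * ((1 + Δ) / (1 - α))) by ring]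
  calc μ.real {ω | m * (2 * ((1 + Δ) / (1 - α))) < ∑ i, (Q i ω : ℝ)}
      ≤ (Real.exp (-τ * a) * geomMgf α τ) ^ m := (measureReal_mono hsub).trans hchernoff
    _ < Real.exp (-(Δ ^ 2 / (2 * (1 + Δ)))) ^ m :=
        pow_lt_pow_left₀ hlt (mul_nonneg (Real.exp_pos _).le (geomMgf_nonneg hα1.le hτ)) hm.ne'
    _ = Real.exp (-((m : ℝ) / 2) * (Δ ^ 2 / (1 + Δ))) := by
        rw [← Real.exp_nat_mul]; congr 1; field_simp
end
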